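/- arXiv:1107.4854 — 4 statements merged into one kernel-verified Lean document; each statement's English description precedes it below -/
import Mathlib

section
/- Let c_0, c_1, … ∈ ℂ with partial sums S_n(t) = Σ_{j=0}^n c_j t^j, let τ_1, …, τ_k be distinct nonzero complex numbers, and let f_1, …, f_k ∈ ℂ. For t ∈ ℂ define the (k+1)×(k+1) matrices A(t), whose first row is (S_k(t), t S_{k−1}(t), …, t^k S_0(t)) and whose (i+1)-th row, for i = 1, …, k, is (τ_i^{−k}(S_k(τ_i) − f_i), τ_i^{−k+1}(S_{k−1}(τ_i) − f_i), …, S_0(τ_i) − f_i), and B(t), identical to A(t) except that its first row is (1, t, …, t^k). Then for every m ∈ {1, …, k}, det A(τ_m) = f_m · det B(τ_m); in particular, whenever det B(τ_m) ≠ 0, the rational function R_k(t) = det A(t)/det B(t) satisfies the interpolation conditions R_k(τ_m) = f_m. -/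
/-!
Since `τ_m^k · τ_m^(j-k) = τ_m^j`, at `t = τ_m` the first row of `A` is `f_m` times the first
row of `B` plus `τ_m^k` times the row of `B` belonging to the node `τ_m`. By multilinearity of the
determinant in the first row, the second summand contributes a determinant with two equal rows.
-/

open Finset

namespace Matrix

variable {n R : Type*} [Fintype n] [DecidableEq n] [CommRing R]

theorem det_updateRow_smul_self_add_smul {i j : n} (hij : i ≠ j) (N : Matrix n n R) (a b : R) :
    (N.updateRow i (a • N i + b • N j)).det = a * N.det := by
  have hrepeat : (N.updateRow i (N j)).det = 0 :=
    det_zero_of_row_eq hij (by rw [updateRow_self, updateRow_ne hij.symm])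
  rw [det_updateRow_add, det_updateRow_smul, det_updateRow_smul, updateRow_eq_self, hrepeat,
    mul_zero, add_zero]

end Matrix

theorem pow_mul_zpow_natCast_sub_natCast {K : Type*} [GroupWithZero K] {x : K} (hx : x ≠ 0)
    (j k : ℕ) : x ^ k * x ^ ((j : ℤ) - k) = x ^ j := by
  rw [← zpow_natCast x k, ← zpow_add₀ hx, add_sub_cancel, zpow_natCast]

theorem pade_type_interpolant_determinantal_general
    (k : ℕ)
    (S : ℕ → ℂ → ℂ)
    (τ : Fin k → ℂ) (hτ0 : ∀ i, τ i ≠ 0)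
    (f : Fin k → ℂ)
    (A B : ℂ → Matrix (Fin (k + 1)) (Fin (k + 1)) ℂ)
    (hA0 : ∀ t (j : Fin (k + 1)), A t 0 j = t ^ (j : ℕ) * S (k - (j : ℕ)) t)
    (hA : ∀ t (i : Fin k) (j : Fin (k + 1)),
      A t i.succ j = τ i ^ (((j : ℕ) : ℤ) - (k : ℤ)) * (S (k - (j : ℕ)) (τ i) - f i))
    (hB0 : ∀ t (j : Fin (k + 1)), B t 0 j = t ^ (j : ℕ))
    (hB : ∀ t (i : Fin k) (j : Fin (k + 1)),
      B t i.succ j = τ i ^ (((j : ℕ) : ℤ) - (k : ℤ)) * (S (k - (j : ℕ)) (τ i) - f i)) :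
    ∀ m : Fin k, (A (τ m)).det = f m * (B (τ m)).det ∧
      ((B (τ m)).det ≠ 0 → (A (τ m)).det / (B (τ m)).det = f m) := by
  intro m
  have hrows : A (τ m) = (B (τ m)).updateRow 0 (f m • B (τ m) 0 + τ m ^ k • B (τ m) m.succ) := by
    ext i j
    cases i using Fin.cases with
    | zero =>
      simp only [Matrix.updateRow_self, Pi.add_apply, Pi.smul_apply, smul_eq_mul, hA0, hB0, hB,
        ← mul_assoc, pow_mul_zpow_natCast_sub_natCast (hτ0 m)]
      ring
    | succ i => rw [Matrix.updateRow_ne (Fin.succ_ne_zero i), hA, hB]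
  have hdet : (A (τ m)).det = f m * (B (τ m)).det := by
    rw [hrows, Matrix.det_updateRow_smul_self_add_smul (Fin.succ_ne_zero m).symm]
  exact ⟨hdet, fun hB_ne => by rw [hdet, mul_div_cancel_right₀ _ hB_ne]⟩

/-- Determinantal expression for the Padé-type rational interpolant:
with `A(t)` having first row `(S_k(t), t S_{k-1}(t), …, t^k S_0(t))` and `B(t)` having
first row `(1, t, …, t^k)`, both with the remaining rows
`(τ_i^{-k}(S_k(τ_i) - f_i), …, S_0(τ_i) - f_i)`, one has `det A(τ_m) = f_m · det B(τ_m)`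
for every node `τ_m`; in particular `R_k(τ_m) = det A(τ_m)/det B(τ_m) = f_m` whenever
`det B(τ_m) ≠ 0`. -/
theorem pade_type_interpolant_determinantal
    (k : ℕ) (c : ℕ → ℂ)
    (S : ℕ → ℂ → ℂ) (hS : ∀ n t, S n t = ∑ j ∈ range (n + 1), c j * t ^ j)
    (τ : Fin k → ℂ) (hτ0 : ∀ i, τ i ≠ 0) (hτ : Function.Injective τ)
    (f : Fin k → ℂ)
    (A B : ℂ → Matrix (Fin (k + 1)) (Fin (k + 1)) ℂ)
    (hA0 : ∀ t (j : Fin (k + 1)), A t 0 j = t ^ (j : ℕ) * S (k - (j : ℕ)) t)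
    (hA : ∀ t (i : Fin k) (j : Fin (k + 1)),
      A t i.succ j = τ i ^ (((j : ℕ) : ℤ) - (k : ℤ)) * (S (k - (j : ℕ)) (τ i) - f i))
    (hB0 : ∀ t (j : Fin (k + 1)), B t 0 j = t ^ (j : ℕ))
    (hB : ∀ t (i : Fin k) (j : Fin (k + 1)),
      B t i.succ j = τ i ^ (((j : ℕ) : ℤ) - (k : ℤ)) * (S (k - (j : ℕ)) (τ i) - f i)) :
    ∀ m : Fin k, (A (τ m)).det = f m * (B (τ m)).det ∧
      ((B (τ m)).det ≠ 0 → (A (τ m)).det / (B (τ m)).det = f m) :=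
  pade_type_interpolant_determinantal_general k S τ hτ0 f A B hA0 hA hB0 hB
end

section
/- Let τ_0, …, τ_k be distinct nonzero complex numbers, f_0, …, f_k ∈ ℂ, w_0, …, w_k ∈ ℂ, and let f(t) = Σ_{i≥0} c_i t^i be a formal power series over ℂ. Set L_i(t) = Π_{j≠i}(t − τ_j), N(t) = Σ_{i=0}^k w_i f_i L_i(t), D(t) = Σ_{i=0}^k w_i L_i(t). Then the following are equivalent: (a) for every j = 0, …, k−1, Σ_{i=0}^k (f_i/τ_i^{j} − c_0/τ_i^{j} − c_1/τ_i^{j−1} − ⋯ − c_j) · (w_i/τ_i) = 0; (b) the formal power series N − f · D has vanishing coefficients in every degree from 0 through k−1. In particular, if moreover the w_i are nonzero, so that D(0) ≠ 0 can be tested, condition (a) implies that the barycentric rational interpolant R_k = N/D satisfies f(t) − R_k(t) = O(t^k), i.e., the coefficients of f − N · D⁻¹ vanish in degrees 0 through k−1 whenever D(0) ≠ 0. -/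
/-!
With `ℓ = ∏ⱼ (X - τⱼ)` we have `Lᵢ = -ℓ · (τᵢ - X)⁻¹` in `ℂ⟦X⟧`, so
`N - f·D = ℓ · G` with `G = ∑ᵢ wᵢ (f - fᵢ) (τᵢ - X)⁻¹`. Since `ℓ(0) = ∏ⱼ (-τⱼ) ≠ 0`, `ℓ` is a unit,
hence `N - f·D` and `G` vanish to the same order; expanding `(τᵢ - X)⁻¹ = ∑ₘ Xᵐ / τᵢ^(m+1)`, the
`j`-th coefficient of `G` is minus the `j`-th equation of (a). Finally `f - N·D⁻¹ = -(N - f·D)·D⁻¹`.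
-/

open Finset PowerSeries Lagrange
open scoped Polynomial

namespace PowerSeries

variable {K : Type*} [Field K]

theorem inv_C_sub_X {τ : K} (hτ : τ ≠ 0) : (C τ - X)⁻¹ = mk fun n => (τ ^ (n + 1))⁻¹ := by
  have h : constantCoeff (C τ - X : K⟦X⟧) ≠ 0 := by simpa using hτ
  rw [inv_eq_iff_mul_eq_one h]
  convert invUnitsSub_mul_sub (Units.mk0 τ hτ) using 2
  · ext n
    simp [coeff_invUnitsSub]
  · rfl

theorem coeff_mul_inv_C_sub_X (F : K⟦X⟧) {τ : K} (hτ : τ ≠ 0) (n : ℕ) :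
    coeff n (F * (C τ - X)⁻¹) = (∑ s ∈ range (n + 1), coeff s F / τ ^ (n - s)) / τ := by
  rw [inv_C_sub_X hτ, coeff_mul, Nat.sum_antidiagonal_eq_sum_range_succ_mk, sum_div]
  refine sum_congr rfl fun s _ => ?_
  simp only [coeff_mk, pow_succ, div_eq_mul_inv, mul_inv, mul_assoc]

theorem sub_mul_inv_eq_neg_sub_mul_mul_inv {D : K⟦X⟧} (hD : constantCoeff D ≠ 0) (F N : K⟦X⟧) :
    F - N * D⁻¹ = -((N - F * D) * D⁻¹) := by
  linear_combination (-F) * PowerSeries.mul_inv_cancel D hD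

end PowerSeries

namespace Lagrange

variable {K ι : Type*} [Field K] [DecidableEq ι] (s : Finset ι) (τ : ι → K)

theorem coe_nodal_erase {i : ι} (hi : i ∈ s) (hτ : τ i ≠ 0) :
    (nodal (s.erase i) τ : K⟦X⟧) = -(nodal s τ : K⟦X⟧) * (C (τ i) - X)⁻¹ := by
  have h : constantCoeff (C (τ i) - X : K⟦X⟧) ≠ 0 := by simpa using hτ
  rw [eq_mul_inv_iff_mul_eq h, nodal_eq_mul_nodal_erase hi]
  push_cast
  ring

omit [DecidableEq ι] in
theorem isUnit_coe_nodal (hτ : ∀ i ∈ s, τ i ≠ 0) : IsUnit (nodal s τ : K⟦X⟧) := by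
  rw [isUnit_iff_constantCoeff, Polynomial.constantCoeff_coe, Polynomial.coeff_zero_eq_eval_zero,
    eval_nodal, isUnit_iff_ne_zero, prod_ne_zero_iff]
  simpa using hτ

theorem coe_sum_mul_nodal_erase_sub_mul (hτ : ∀ i ∈ s, τ i ≠ 0) (w fv : ι → K) (F : K⟦X⟧) :
    ((∑ i ∈ s, Polynomial.C (w i * fv i) * nodal (s.erase i) τ : K[X]) : K⟦X⟧)
        - F * ((∑ i ∈ s, Polynomial.C (w i) * nodal (s.erase i) τ : K[X]) : K⟦X⟧)
      = (nodal s τ : K⟦X⟧) * ∑ i ∈ s, C (w i) * (F - C (fv i)) * (C (τ i) - X)⁻¹ := by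
  simp only [← Polynomial.coeToPowerSeries.ringHom_apply, map_sum, map_mul, mul_sum,
    ← sum_sub_distrib]
  refine sum_congr rfl fun i hi => ?_
  simp only [Polynomial.coeToPowerSeries.ringHom_apply, Polynomial.coe_C,
    coe_nodal_erase s τ hi (hτ i hi)]
  ring

omit [DecidableEq ι] in
theorem coeff_sum_C_mul_sub_C_mul_inv_C_sub_X (hτ : ∀ i ∈ s, τ i ≠ 0) (w fv : ι → K)
    (F : K⟦X⟧) (n : ℕ) :
    coeff n (∑ i ∈ s, C (w i) * (F - C (fv i)) * (C (τ i) - X)⁻¹)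
      = -∑ i ∈ s, (fv i / τ i ^ n - ∑ j ∈ range (n + 1), coeff j F / τ i ^ (n - j))
          * (w i / τ i) := by
  rw [map_sum, ← sum_neg_distrib]
  refine sum_congr rfl fun i hi => ?_
  rw [mul_assoc, coeff_C_mul, coeff_mul_inv_C_sub_X _ (hτ i hi)]
  simp only [map_sub, coeff_C, sub_div, sum_sub_distrib, ite_div, zero_div, sum_ite_eq',
    mem_range, Nat.zero_lt_succ, if_true, Nat.sub_zero]
  ring

end Lagrange

theorem pade_type_barycentric_weight_system_general
    (k : ℕ) (τ : Fin (k + 1) → ℂ) (hτ0 : ∀ i, τ i ≠ 0)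
    (fv w : Fin (k + 1) → ℂ)
    (F : PowerSeries ℂ) (c : ℕ → ℂ) (hc : ∀ i, c i = PowerSeries.coeff i F)
    (L : Fin (k + 1) → Polynomial ℂ)
    (hL : ∀ i, L i = ∏ j ∈ univ.erase i, (Polynomial.X - Polynomial.C (τ j)))
    (N D : Polynomial ℂ)
    (hN : N = ∑ i, Polynomial.C (w i * fv i) * L i)
    (hD : D = ∑ i, Polynomial.C (w i) * L i) :
    ((∀ j < k, ∑ i, (fv i / τ i ^ j - ∑ s ∈ range (j + 1), c s / τ i ^ (j - s)) * (w i / τ i) = 0)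
        ↔ ∀ n < k, PowerSeries.coeff n ((N : PowerSeries ℂ) - F * (D : PowerSeries ℂ)) = 0)
    ∧ ((∀ i, w i ≠ 0) → D.eval 0 ≠ 0 →
        (∀ j < k, ∑ i,
          (fv i / τ i ^ j - ∑ s ∈ range (j + 1), c s / τ i ^ (j - s)) * (w i / τ i) = 0) →
        ∀ n < k, PowerSeries.coeff n (F - (N : PowerSeries ℂ) * (D : PowerSeries ℂ)⁻¹) = 0) := by
  have hτ0' : ∀ i ∈ univ, τ i ≠ 0 := fun i _ => hτ0 i
  have hND : (N - F * D : ℂ⟦X⟧)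
      = (nodal univ τ : ℂ⟦X⟧) * ∑ i, C (w i) * (F - C (fv i)) * (C (τ i) - X)⁻¹ := by
    simp only [hN, hD, hL, ← nodal_eq]
    exact coe_sum_mul_nodal_erase_sub_mul univ τ hτ0' w fv F
  have weight_system_iff : (∀ j < k, ∑ i,
        (fv i / τ i ^ j - ∑ s ∈ range (j + 1), c s / τ i ^ (j - s)) * (w i / τ i) = 0)
      ↔ ∀ n < k, coeff n (N - F * D : ℂ⟦X⟧) = 0 := by
    rw [← X_pow_dvd_iff, hND, (isUnit_coe_nodal univ τ hτ0').dvd_mul_left, X_pow_dvd_iff]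
    refine forall₂_congr fun n _ => ?_
    simp only [hc, coeff_sum_C_mul_sub_C_mul_inv_C_sub_X univ τ hτ0', neg_eq_zero]
  refine ⟨weight_system_iff, fun _ hD0 ha => ?_⟩
  have hD0' : constantCoeff (D : ℂ⟦X⟧) ≠ 0 := by
    rwa [Polynomial.constantCoeff_coe, Polynomial.coeff_zero_eq_eval_zero]
  rw [← X_pow_dvd_iff, sub_mul_inv_eq_neg_sub_mul_mul_inv hD0']
  exact ((X_pow_dvd_iff.mpr (weight_system_iff.mp ha)).mul_right _).neg_right

/-- The weights of the Padé-type barycentric interpolant: the linear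
system (a) on the weights `w_i` holds iff the formal power series `N - f·D` has vanishing
coefficients in degrees `0, …, k-1`; in particular, for nonzero weights and `D(0) ≠ 0`,
(a) implies that the coefficients of `f - N·D⁻¹` vanish in degrees `0, …, k-1`,
i.e. `f(t) - R_k(t) = O(t^k)`. -/
theorem pade_type_barycentric_weight_system
    (k : ℕ) (τ : Fin (k + 1) → ℂ) (hτ : Function.Injective τ) (hτ0 : ∀ i, τ i ≠ 0)
    (fv w : Fin (k + 1) → ℂ)
    (F : PowerSeries ℂ) (c : ℕ → ℂ) (hc : ∀ i, c i = PowerSeries.coeff i F)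
    (L : Fin (k + 1) → Polynomial ℂ)
    (hL : ∀ i, L i = ∏ j ∈ univ.erase i, (Polynomial.X - Polynomial.C (τ j)))
    (N D : Polynomial ℂ)
    (hN : N = ∑ i, Polynomial.C (w i * fv i) * L i)
    (hD : D = ∑ i, Polynomial.C (w i) * L i) :
    ((∀ j < k, ∑ i, (fv i / τ i ^ j - ∑ s ∈ range (j + 1), c s / τ i ^ (j - s)) * (w i / τ i) = 0)
        ↔ ∀ n < k, PowerSeries.coeff n ((N : PowerSeries ℂ) - F * (D : PowerSeries ℂ)) = 0)
    ∧ ((∀ i, w i ≠ 0) → D.eval 0 ≠ 0 →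
        (∀ j < k, ∑ i,
          (fv i / τ i ^ j - ∑ s ∈ range (j + 1), c s / τ i ^ (j - s)) * (w i / τ i) = 0) →
        ∀ n < k, PowerSeries.coeff n (F - (N : PowerSeries ℂ) * (D : PowerSeries ℂ)⁻¹) = 0) :=
  pade_type_barycentric_weight_system_general k τ hτ0 fv w F c hc L hL N D hN hD
end

section
/- Let n, k ≥ 1, let a < b be real numbers with 0 ∈ [a, b], let τ_1, …, τ_k be distinct nonzero points of [a, b], and let t ∈ [a, b] with t ∉ {0, τ_1, …, τ_k}. Let D, N, Q be real polynomials with deg N + deg Q ≤ n + k − 1, and let G : ℝ → ℝ be n + k times differentiable on an open interval containing [a, b]. Set H(x) = G(x) D(x) − N(x) Q(x), and assume H^{(j)}(0) = 0 for j = 0, …, n − 1 and H(τ_i) = 0 for i = 1, …, k. Then there exists ξ ∈ [a, b] (depending on t) such that G(t) D(t) − N(t) Q(t) = (t^n (t − τ_1) ⋯ (t − τ_k) / (n + k)!) · (G · D)^{(n+k)}(ξ). In particular, writing G = f · Q where f is the interpolated function (so that f Q is smooth on [a, b] even if f has poles cancelled by the factor φ dividing Q), the interpolation error satisfies f(t)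 − N(t)/D(t) = (t^n (t − τ_1)⋯(t − τ_k) / ((n+k)! D(t) Q(t))) · d^{n+k}/dξ^{n+k}[f(ξ) D(ξ) Q(ξ)]|_{ξ = ξ_t} whenever D(t) Q(t) ≠ 0. -/
/-!
Cauchy's remainder argument. Let `ω(x) = x ^ n ∏ (x - τ i)` and choose `K` with `H t = K ω(t)`.
Then `W = H - K ω` vanishes to order `n` at `0` and at the `k + 1` distinct nonzero points
`t, τ 1, …, τ k`, so repeated Rolle (each step loses one zero and never produces `0`) gives
`ξ` with `W^(n+k)(ξ) = 0`, i.e. `H^(n+k)(ξ) = K (n + k)!`. As `deg (N Q) < n + k`,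
`H^(n+k) = (G D)^(n+k)`. Since `G` is only `n + k` times differentiable, not `C^(n+k)`, the
iterated derivatives of sums and products are computed locally on the open interval rather than
through `ContDiff`.
-/
open Finset Polynomial

theorem Polynomial.iteratedDeriv_eval {𝕜 : Type*} [NontriviallyNormedField 𝕜] (p : 𝕜[X])
    (j : ℕ) :
    iteratedDeriv j (fun x => p.eval x) = fun x => (derivative^[j] p).eval x := by
  induction j generalizing p with
  | zero => rfl
  | succ j ih =>
    have hp : _root_.deriv (fun x => p.eval x) = fun x => p.derivative.eval x := by
      ext x
      exact p.deriv
    rw [iteratedDeriv_succ', hp, ih, Function.iterate_succ_apply]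

theorem Polynomial.iterate_derivative_natDegree {R : Type*} [CommSemiring R] (p : R[X]) :
    derivative^[p.natDegree] p = C (p.natDegree.factorial * p.leadingCoeff) := by
  have hdeg : (derivative^[p.natDegree] p).natDegree ≤ 0 := by
    have := natDegree_iterate_derivative p p.natDegree
    omega
  rw [eq_C_of_natDegree_le_zero hdeg, coeff_iterate_derivative, zero_add, Nat.descFactorial_self,
    nsmul_eq_mul, leadingCoeff]

def IteratedDifferentiableOn (𝕜 : Type*) [NontriviallyNormedField 𝕜] (m : ℕ) (f : 𝕜 → 𝕜)
    (U : Set 𝕜) : Prop :=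
  ∀ i < m, DifferentiableOn 𝕜 (iteratedDeriv i f) U

namespace IteratedDifferentiableOn

variable {𝕜 : Type*} [NontriviallyNormedField 𝕜] {m : ℕ} {f g : 𝕜 → 𝕜} {U : Set 𝕜}

theorem succ_iff :
    IteratedDifferentiableOn 𝕜 (m + 1) f U ↔
      DifferentiableOn 𝕜 f U ∧ IteratedDifferentiableOn 𝕜 m (deriv f) U := by
  simp only [IteratedDifferentiableOn, Nat.forall_lt_succ_left, iteratedDeriv_zero,
    iteratedDeriv_succ']

theorem mono (hf : IteratedDifferentiableOn 𝕜 m f U) {m' : ℕ} (hm : m' ≤ m) :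
    IteratedDifferentiableOn 𝕜 m' f U :=
  fun i hi => hf i (hi.trans_le hm)

theorem congr (hU : IsOpen U) (hf : IteratedDifferentiableOn 𝕜 m f U) (hfg : Set.EqOn f g U) :
    IteratedDifferentiableOn 𝕜 m g U :=
  fun i hi => (hf i hi).congr (hfg.symm.iteratedDeriv_of_isOpen hU i)

theorem polynomial_eval (p : 𝕜[X]) :
    IteratedDifferentiableOn 𝕜 m (fun x => p.eval x) U := fun i _ => by
  rw [iteratedDeriv_eval]
  exact Polynomial.differentiableOn _

theorem iteratedDeriv_add (hU : IsOpen U) (hf : IteratedDifferentiableOn 𝕜 m f U)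
    (hg : IteratedDifferentiableOn 𝕜 m g U) {j : ℕ} (hj : j ≤ m) :
    Set.EqOn (iteratedDeriv j (f + g)) (iteratedDeriv j f + iteratedDeriv j g) U := by
  induction j with
  | zero => intro x _; rfl
  | succ j ih =>
    intro x hx
    have hx' := hU.mem_nhds hx
    rw [iteratedDeriv_succ, iteratedDeriv_succ, iteratedDeriv_succ,
      (Filter.eventuallyEq_of_mem hx' (ih (by omega))).deriv_eq]
    exact deriv_add ((hf j hj).differentiableAt hx') ((hg j hj).differentiableAt hx')

theorem add (hU : IsOpen U) (hf : IteratedDifferentiableOn 𝕜 m f U)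
    (hg : IteratedDifferentiableOn 𝕜 m g U) : IteratedDifferentiableOn 𝕜 m (f + g) U :=
  fun i hi => ((hf i hi).add (hg i hi)).congr (iteratedDeriv_add hU hf hg hi.le)

theorem mul (hU : IsOpen U) (hf : IteratedDifferentiableOn 𝕜 m f U)
    (hg : IteratedDifferentiableOn 𝕜 m g U) : IteratedDifferentiableOn 𝕜 m (f * g) U := by
  induction m generalizing f g with
  | zero => intro i hi; omega
  | succ m ih =>
    obtain ⟨hf₀, hf'⟩ := succ_iff.mp hf
    obtain ⟨hg₀, hg'⟩ := succ_iff.mp hg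
    have hderiv : Set.EqOn (deriv f * g + f * deriv g) (deriv (f * g)) U := fun x hx =>
      (deriv_mul ((hf₀ x hx).differentiableAt (hU.mem_nhds hx))
        ((hg₀ x hx).differentiableAt (hU.mem_nhds hx))).symm
    exact succ_iff.mpr ⟨hf₀.mul hg₀,
      ((ih hf' (hg.mono m.le_succ)).add hU (ih (hf.mono m.le_succ) hg')).congr hU hderiv⟩

theorem iteratedDeriv_sub_eval (hU : IsOpen U) (hf : IteratedDifferentiableOn 𝕜 m f U)
    (p : 𝕜[X]) {j : ℕ} (hj : j ≤ m) {x : 𝕜} (hx : x ∈ U) :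
    iteratedDeriv j (fun y => f y - p.eval y) x =
      iteratedDeriv j f x - (derivative^[j] p).eval x := by
  have hsub : (fun y => f y - p.eval y) = f + fun y => (-p).eval y := by
    ext
    simp [sub_eq_add_neg]
  rw [hsub, iteratedDeriv_add hU hf (polynomial_eval (-p)) hj hx, Pi.add_apply,
    iteratedDeriv_eval, iterate_derivative_neg]
  simp only [eval_neg, sub_eq_add_neg]

theorem sub_eval (hU : IsOpen U) (hf : IteratedDifferentiableOn 𝕜 m f U) (p : 𝕜[X]) :
    IteratedDifferentiableOn 𝕜 m (fun y => f y - p.eval y) U :=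
  fun i hi => ((hf i hi).sub (Polynomial.differentiableOn _)).congr fun _ hx =>
    hf.iteratedDeriv_sub_eval hU p hi.le hx

end IteratedDifferentiableOn

section Rolle

variable {f : ℝ → ℝ} {s : Set ℝ} [hs : s.OrdConnected]

theorem exists_finset_deriv_eq_zero (hf : ContinuousOn f s) {S : Finset ℝ} {q : ℕ}
    (hS : #S = q + 1) (hSs : ↑S ⊆ s) (hSf : ∀ x ∈ S, f x = 0) :
    ∃ T : Finset ℝ, #T = q ∧ ↑T ⊆ s ∧ Disjoint S T ∧ ∀ x ∈ T, deriv f x = 0 := by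
  set e := S.orderEmbOfFin hS
  have he : ∀ i, e i ∈ S := S.orderEmbOfFin_mem hS
  have hRolle (i : Fin q) : ∃ y ∈ Set.Ioo (e i.castSucc) (e i.succ), deriv f y = 0 :=
    exists_deriv_eq_zero (e.strictMono i.castSucc_lt_succ)
      (hf.mono (hs.out (hSs (he _)) (hSs (he _))))
      (by rw [hSf _ (he _), hSf _ (he _)])
  choose y hy hy0 using hRolle
  have hy_mono : StrictMono y := fun i j hij =>
    calc y i < e i.succ := (hy i).2
      _ ≤ e j.castSucc := e.monotone (Fin.succ_le_castSucc_iff.mpr hij)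
      _ < y j := (hy j).1
  refine ⟨univ.image y, by simp [card_image_of_injective _ hy_mono.injective], ?_, ?_, ?_⟩
  · intro x hx
    obtain ⟨i, -, rfl⟩ := mem_image.mp hx
    exact hs.out (hSs (he _)) (hSs (he _)) (Set.Ioo_subset_Icc_self (hy i))
  · refine disjoint_right.mpr fun x hx hxS => ?_
    obtain ⟨i, -, rfl⟩ := mem_image.mp hx
    obtain ⟨j, hj⟩ : y i ∈ Set.range e := by rwa [S.range_orderEmbOfFin hS]
    have h₁ := e.lt_iff_lt.mp (hj ▸ (hy i).1)
    have h₂ := e.lt_iff_lt.mp (hj ▸ (hy i).2)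
    rw [Fin.lt_def] at h₁ h₂
    simp only [Fin.val_castSucc, Fin.val_succ] at h₁ h₂
    omega
  · intro x hx
    obtain ⟨i, -, rfl⟩ := mem_image.mp hx
    exact hy0 i

theorem exists_iteratedDeriv_eq_zero_of_card {p : ℕ}
    (hf : ∀ i < p, ContinuousOn (iteratedDeriv i f) s) {S : Finset ℝ} (hS : #S = p + 1)
    (hSs : ↑S ⊆ s) (hSf : ∀ x ∈ S, f x = 0) :
    ∃ ξ ∈ s, iteratedDeriv p f ξ = 0 := by
  induction p generalizing f S with
  | zero =>
    obtain ⟨x, hx⟩ := card_pos.mp (by omega : 0 < #S)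
    exact ⟨x, hSs hx, by simpa using hSf x hx⟩
  | succ p ih =>
    obtain ⟨T, hT, hTs, -, hTf⟩ :=
      exists_finset_deriv_eq_zero (by simpa using hf 0 p.succ_pos) hS hSs hSf
    rw [iteratedDeriv_succ']
    exact ih (fun i hi => by simpa only [iteratedDeriv_succ'] using hf (i + 1) (by omega))
      hT hTs hTf

theorem exists_iteratedDeriv_eq_zero_of_card_of_iteratedDeriv_eq_zero {n p : ℕ} {c : ℝ}
    (hf : ∀ i < n + p, ContinuousOn (iteratedDeriv i f) s) (hc : c ∈ s)
    (hfc : ∀ j < n, iteratedDeriv j f c = 0) {S : Finset ℝ} (hS : #S = p + 1) (hSs : ↑S ⊆ s)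
    (hcS : c ∉ S) (hSf : ∀ x ∈ S, f x = 0) :
    ∃ ξ ∈ s, iteratedDeriv (n + p) f ξ = 0 := by
  induction n generalizing f S with
  | zero => simpa using exists_iteratedDeriv_eq_zero_of_card (by simpa using hf) hS hSs hSf
  | succ n ih =>
    obtain ⟨T, hT, hTs, hST, hTf⟩ := exists_finset_deriv_eq_zero (S := insert c S)
      (by simpa using hf 0 (by omega)) (by rw [card_insert_of_notMem hcS, hS])
      (by simpa [Set.insert_subset_iff] using ⟨hc, hSs⟩)
      (by simpa using ⟨hfc 0 (by omega), hSf⟩)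
    rw [show n + 1 + p = n + p + 1 by omega, iteratedDeriv_succ']
    exact ih (fun i hi => by simpa only [iteratedDeriv_succ'] using hf (i + 1) (by omega))
      (fun j hj => by simpa only [iteratedDeriv_succ'] using hfc (j + 1) (by omega))
      hT hTs (disjoint_left.mp hST (mem_insert_self c S)) hTf

end Rolle

theorem exists_eq_mul_iteratedDeriv_of_vanishing {H : ℝ → ℝ} {U s : Set ℝ} [s.OrdConnected]
    (hU : IsOpen U) (hsU : s ⊆ U) {n : ℕ} {c : ℝ} {S : Finset ℝ}
    (hH : IteratedDifferentiableOn ℝ (n + #S) H U) (hc : c ∈ s) (hSs : ↑S ⊆ s) (hcS : c ∉ S)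
    (hHc : ∀ j < n, iteratedDeriv j H c = 0) (hHS : ∀ x ∈ S, H x = 0)
    {t : ℝ} (ht : t ∈ s) (htc : t ≠ c) (htS : t ∉ S) :
    ∃ ξ ∈ s, H t = ((t - c) ^ n * ∏ x ∈ S, (t - x)) / (n + #S).factorial *
      iteratedDeriv (n + #S) H ξ := by
  set ω : ℝ[X] := (X - C c) ^ n * Lagrange.nodal S id
  have hω_eval (x : ℝ) : ω.eval x = (x - c) ^ n * ∏ y ∈ S, (x - y) := by
    simp [ω, Lagrange.eval_nodal]
  have hω_monic : ω.Monic := ((monic_X_sub_C c).pow n).mul Lagrange.nodal_monic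
  have hω_deg : ω.natDegree = n + #S := by
    rw [((monic_X_sub_C c).pow n).natDegree_mul Lagrange.nodal_monic,
      (monic_X_sub_C c).natDegree_pow, natDegree_X_sub_C, Lagrange.natDegree_nodal, mul_one]
  have hω_top : derivative^[n + #S] ω = C ((n + #S).factorial : ℝ) := by
    rw [← hω_deg, iterate_derivative_natDegree, hω_monic.leadingCoeff, mul_one]
  have hω_c (j : ℕ) (hj : j < n) : (derivative^[j] ω).eval c = 0 :=
    isRoot_iterate_derivative_of_lt_rootMultiplicity <| hj.trans_le <|
      (le_rootMultiplicity_iff hω_monic.ne_zero).mpr (dvd_mul_right _ _)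
  have hω_t : ω.eval t ≠ 0 := by
    rw [hω_eval]
    exact mul_ne_zero (pow_ne_zero _ (sub_ne_zero.mpr htc))
      (prod_ne_zero_iff.mpr fun x hx => sub_ne_zero.mpr (ne_of_mem_of_not_mem hx htS).symm)
  obtain ⟨K, hK⟩ : ∃ K, H t = K * ω.eval t := ⟨H t / ω.eval t, (div_mul_cancel₀ _ hω_t).symm⟩
  set W := fun x => H x - (C K * ω).eval x
  have hW_iteratedDeriv {j : ℕ} (hj : j ≤ n + #S) {x : ℝ} (hx : x ∈ U) :
      iteratedDeriv j W x = iteratedDeriv j H x - K * (derivative^[j] ω).eval x := by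
    rw [hH.iteratedDeriv_sub_eval hU _ hj hx, iterate_derivative_C_mul, eval_mul, eval_C]
  have hW_c (j : ℕ) (hj : j < n) : iteratedDeriv j W c = 0 := by
    rw [hW_iteratedDeriv (by omega) (hsU hc), hHc j hj, hω_c j hj, mul_zero, sub_zero]
  have hW_zero : ∀ x ∈ insert t S, W x = 0 := by
    simp only [mem_insert, forall_eq_or_imp, W, eval_mul, eval_C]
    refine ⟨sub_eq_zero.mpr hK, fun x hx => ?_⟩
    rw [hHS x hx, hω_eval, prod_eq_zero hx (sub_self x), mul_zero, mul_zero, sub_zero]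
  obtain ⟨ξ, hξ, hWξ⟩ := exists_iteratedDeriv_eq_zero_of_card_of_iteratedDeriv_eq_zero
    (fun i hi => (((hH.sub_eval hU (C K * ω)) i hi).mono hsU).continuousOn) hc hW_c
    (card_insert_of_notMem htS) (by simpa [Set.insert_subset_iff] using ⟨ht, hSs⟩)
    (by simpa [htc.symm] using hcS) hW_zero
  refine ⟨ξ, hξ, ?_⟩
  rw [hW_iteratedDeriv le_rfl (hsU hξ), hω_top, eval_C, sub_eq_zero] at hWξ
  rw [hWξ, ← hω_eval, hK]
  field_simp

theorem sub_div_eq_of_mul_sub_mul_eq {φ ν d q w c e : ℝ} (hd : d ≠ 0) (hq : q ≠ 0)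
    (h : φ * q * d - ν * q = w / c * e) : φ - ν / d = w / (c * d * q) * e := by
  calc φ - ν / d = (φ * q * d - ν * q) / (d * q) := by field_simp
    _ = w / (c * d * q) * e := by rw [h]; ring

theorem pade_type_interpolation_error_formula_general
    (n k : ℕ) (hn : 1 ≤ n)
    (a b : ℝ) (h0ab : (0 : ℝ) ∈ Set.Icc a b)
    (τ : Fin k → ℝ) (hinj : Function.Injective τ) (hτ0 : ∀ i, τ i ≠ 0)
    (hτab : ∀ i, τ i ∈ Set.Icc a b)
    (t : ℝ) (ht : t ∈ Set.Icc a b) (ht0 : t ≠ 0) (htτ : ∀ i, t ≠ τ i)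
    (D N Q : Polynomial ℝ)
    (hdeg : N.natDegree + Q.natDegree ≤ n + k - 1)
    (A B : ℝ) (hAB : Set.Icc a b ⊆ Set.Ioo A B)
    (G : ℝ → ℝ)
    (hG : ∀ i < n + k, ∀ y ∈ Set.Ioo A B, DifferentiableAt ℝ (iteratedDeriv i G) y)
    (H : ℝ → ℝ) (hH : ∀ x, H x = G x * D.eval x - N.eval x * Q.eval x)
    (hH0 : ∀ j < n, iteratedDeriv j H 0 = 0)
    (hHτ : ∀ i, H (τ i) = 0) :
    ∃ ξ ∈ Set.Icc a b,
      G t * D.eval t - N.eval t * Q.eval t =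
        (t ^ n * ∏ i, (t - τ i)) / ((n + k).factorial : ℝ) *
          iteratedDeriv (n + k) (fun x => G x * D.eval x) ξ ∧
      ∀ f : ℝ → ℝ, (∀ x, G x = f x * Q.eval x) → D.eval t * Q.eval t ≠ 0 →
        f t - N.eval t / D.eval t =
          (t ^ n * ∏ i, (t - τ i)) /
              (((n + k).factorial : ℝ) * D.eval t * Q.eval t) *
            iteratedDeriv (n + k) (fun x => f x * D.eval x * Q.eval x) ξ := by
  have hGD : IteratedDifferentiableOn ℝ (n + k) (fun x => G x * D.eval x) (Set.Ioo A B) :=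
    IteratedDifferentiableOn.mul isOpen_Ioo
      (fun i hi y hy => (hG i hi y hy).differentiableWithinAt)
      (IteratedDifferentiableOn.polynomial_eval D)
  have hH_eq : H = fun x => G x * D.eval x - (N * Q).eval x := by
    ext x
    rw [hH, eval_mul]
  have hNQ : derivative^[n + k] (N * Q) = 0 :=
    iterate_derivative_eq_zero <| natDegree_mul_le.trans_lt <| by omega
  have hS : #(univ.image τ) = k := by simp [card_image_of_injective _ hinj]
  obtain ⟨ξ, hξ, hHt⟩ := exists_eq_mul_iteratedDeriv_of_vanishing (H := H) (c := 0)
    (S := univ.image τ) isOpen_Ioo hAB (by rw [hS, hH_eq]; exact hGD.sub_eval isOpen_Ioo _)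
    h0ab (by simpa [Set.range_subset_iff] using hτab) (by simpa using hτ0) (by simpa using hH0)
    (by simpa using hHτ) ht ht0 (by simpa [eq_comm] using htτ)
  have hH_top : iteratedDeriv (n + k) H ξ = iteratedDeriv (n + k) (fun x => G x * D.eval x) ξ := by
    rw [hH_eq, hGD.iteratedDeriv_sub_eval isOpen_Ioo _ le_rfl (hAB hξ), hNQ, eval_zero,
      sub_zero]
  have hmain : G t * D.eval t - N.eval t * Q.eval t =
      (t ^ n * ∏ i, (t - τ i)) / ((n + k).factorial : ℝ) *
        iteratedDeriv (n + k) (fun x => G x * D.eval x) ξ := by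
    rw [← hH, hHt, hS, hH_top, prod_image fun i _ j _ h => hinj h, sub_zero]
  refine ⟨ξ, hξ, hmain, fun f hf hDQ => ?_⟩
  have hfDQ : (fun x => f x * D.eval x * Q.eval x) = fun x => G x * D.eval x := by
    ext x
    rw [hf, mul_right_comm]
  rw [hf t] at hmain
  rw [hfDQ]
  exact sub_div_eq_of_mul_sub_mul_eq (left_ne_zero_of_mul hDQ) (right_ne_zero_of_mul hDQ) hmain

/-- Error formula for Padé-type rational and barycentric interpolants:
if `H = G·D - N·Q` vanishes to order `n` at `0` and at the `k` distinct nonzero nodes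
`τ_i ∈ [a, b]`, and `G` is `n + k` times differentiable, then for each
`t ∈ [a, b] \ {0, τ_1, …, τ_k}` there is `ξ = ξ_t ∈ [a, b]` with
`G(t)D(t) - N(t)Q(t) = (t^n ∏ (t - τ_i)/(n+k)!) · (G·D)^{(n+k)}(ξ)`; in particular,
writing `G = f·Q`, the interpolation error satisfies
`f(t) - N(t)/D(t) = (t^n ∏ (t - τ_i)/((n+k)! D(t) Q(t))) · (f·D·Q)^{(n+k)}(ξ)`
whenever `D(t)Q(t) ≠ 0`. -/
theorem pade_type_interpolation_error_formula
    (n k : ℕ) (hn : 1 ≤ n) (hk : 1 ≤ k)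
    (a b : ℝ) (hab : a < b) (h0ab : (0 : ℝ) ∈ Set.Icc a b)
    (τ : Fin k → ℝ) (hinj : Function.Injective τ) (hτ0 : ∀ i, τ i ≠ 0)
    (hτab : ∀ i, τ i ∈ Set.Icc a b)
    (t : ℝ) (ht : t ∈ Set.Icc a b) (ht0 : t ≠ 0) (htτ : ∀ i, t ≠ τ i)
    (D N Q : Polynomial ℝ)
    (hdeg : N.natDegree + Q.natDegree ≤ n + k - 1)
    (A B : ℝ) (hAB : Set.Icc a b ⊆ Set.Ioo A B)
    (G : ℝ → ℝ)
    (hG : ∀ i < n + k, ∀ y ∈ Set.Ioo A B, DifferentiableAt ℝ (iteratedDeriv i G) y)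
    (H : ℝ → ℝ) (hH : ∀ x, H x = G x * D.eval x - N.eval x * Q.eval x)
    (hH0 : ∀ j < n, iteratedDeriv j H 0 = 0)
    (hHτ : ∀ i, H (τ i) = 0) :
    ∃ ξ ∈ Set.Icc a b,
      G t * D.eval t - N.eval t * Q.eval t =
        (t ^ n * ∏ i, (t - τ i)) / ((n + k).factorial : ℝ) *
          iteratedDeriv (n + k) (fun x => G x * D.eval x) ξ ∧
      ∀ f : ℝ → ℝ, (∀ x, G x = f x * Q.eval x) → D.eval t * Q.eval t ≠ 0 →
        f t - N.eval t / D.eval t =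
          (t ^ n * ∏ i, (t - τ i)) /
              (((n + k).factorial : ℝ) * D.eval t * Q.eval t) *
            iteratedDeriv (n + k) (fun x => f x * D.eval x * Q.eval x) ξ :=
  pade_type_interpolation_error_formula_general n k hn a b h0ab τ hinj hτ0 hτab t ht ht0 htτ D N Q
    hdeg A B hAB G hG H hH hH0 hHτ
end

section
/- Let P, Q ∈ ℂ[t] with deg P ≤ k, deg Q ≤ k and Q(0) = 1, let (c_i) be the coefficients of the formal power series P · Q⁻¹ (Q is invertible as a power series since its constant term is 1), with partial sums S_n(t) = Σ_{j=0}^n c_j t^j, and let τ_1, …, τ_k be distinct nonzero complex numbers with Q(τ_m) ≠ 0 for all m; set f_m = P(τ_m)/Q(τ_m). Writing b_0, …, b_k for the coefficients of Q (so b_0 = 1), the following hold: (1) for every m = 1, …, k, Σ_{i=0}^k b_i τ_m^i (S_{k−i}(τ_m) − f_m) = 0, i.e., the coefficients of Q solve the interpolation system defining the Padé-type rational interpolant; (2) the numerator relations a_n = Σ_{j=0}^{n} c_{n−j} b_j for n = 0, …, k produce exactly the coefficients of P. Consequently, if in addition the interpolation system normalized by b_0 = 1 has a unique solution, then the Padé-type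 rational interpolant R_k constructed from the data (c_i) and the k interpolation conditions R_k(τ_m) = f_m is identical to the rational function f = P/Q. -/
/-!
Since `(P·Q⁻¹)·Q = P` as power series, the Cauchy product of `c` with the coefficients of `Q`
gives the coefficients of `P`. The `m`-th interpolation equation says `N(τ_m) = D(τ_m) f_m`, where
`D = ∑ β_i tⁱ` and `N` is the truncation to degree `k` of `D · ∑ c_j tʲ`; for `β` the coefficients
of `Q` this reads `P(τ_m) = Q(τ_m) · P(τ_m)/Q(τ_m)`. Uniqueness then forces every normalized
solution to agree with the coefficients of `Q` up to degree `k`.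
-/

open Finset

/-- The linear interpolation system defining the denominator coefficients of the
Padé-type rational interpolant: `∑_{i=0}^k β_i τ_m^i (S_{k-i}(τ_m) - f_m) = 0`
for every node `τ_m`. -/
def PadeInterpSystem (k : ℕ) (τ fv : Fin k → ℂ) (S : ℕ → ℂ → ℂ) (β : ℕ → ℂ) : Prop :=
  ∀ m : Fin k, ∑ i ∈ range (k + 1), β i * τ m ^ i * (S (k - i) (τ m) - fv m) = 0

theorem PowerSeries.sum_coeff_mul_inv_mul_coeff {K : Type*} [Field K] (φ ψ : PowerSeries K)
    (hψ : constantCoeff ψ ≠ 0) (n : ℕ) :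
    ∑ j ∈ range (n + 1), coeff (n - j) (φ * ψ⁻¹) * coeff j ψ = coeff n φ := by
  have h : ψ * (φ * ψ⁻¹) = φ := by rw [mul_left_comm, PowerSeries.mul_inv_cancel _ hψ, mul_one]
  rw [← congrArg (coeff n) h, coeff_mul, Nat.sum_antidiagonal_eq_sum_range_succ_mk]
  exact sum_congr rfl fun j _ => mul_comm _ _

theorem sum_mul_pow_mul_partialSum {R : Type*} [CommSemiring R] (k : ℕ) (b c : ℕ → R) (t : R) :
    ∑ i ∈ range (k + 1), b i * t ^ i * ∑ j ∈ range (k - i + 1), c j * t ^ j =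
      ∑ n ∈ range (k + 1), (∑ j ∈ range (n + 1), c (n - j) * b j) * t ^ n := calc
  _ = ∑ i ∈ range (k + 1), ∑ j ∈ range (k + 1 - i), b i * c j * t ^ (i + j) := by
    refine sum_congr rfl fun i hi => ?_
    rw [Nat.sub_add_comm (mem_range_succ_iff.1 hi), mul_sum]
    exact sum_congr rfl fun j _ => by ring
  _ = ∑ n ∈ range (k + 1), ∑ j ∈ range (n + 1), b j * c (n - j) * t ^ (j + (n - j)) :=
    (sum_range_diag_flip _ fun i j => b i * c j * t ^ (i + j)).symm
  _ = _ := by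
    refine sum_congr rfl fun n _ => ?_
    rw [sum_mul]
    refine sum_congr rfl fun j hj => ?_
    rw [Nat.add_sub_cancel' (mem_range_succ_iff.1 hj)]
    ring

theorem padeInterpSystem_iff {k : ℕ} {τ fv : Fin k → ℂ} {S : ℕ → ℂ → ℂ} {c β : ℕ → ℂ}
    (hS : ∀ n t, S n t = ∑ j ∈ range (n + 1), c j * t ^ j) :
    PadeInterpSystem k τ fv S β ↔
      ∀ m, ∑ n ∈ range (k + 1), (∑ j ∈ range (n + 1), c (n - j) * β j) * τ m ^ n =
        (∑ i ∈ range (k + 1), β i * τ m ^ i) * fv m := by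
  refine forall_congr' fun m => ?_
  simp only [mul_sub, sum_sub_distrib, hS, sum_mul_pow_mul_partialSum, sum_mul, sub_eq_zero]

theorem Polynomial.sum_range_C_mul_X_pow_eq {R : Type*} [Semiring R] {p : Polynomial R} {k : ℕ}
    (hp : p.natDegree ≤ k) {a : ℕ → R} (ha : ∀ n ≤ k, a n = p.coeff n) :
    ∑ n ∈ range (k + 1), Polynomial.C (a n) * Polynomial.X ^ n = p := by
  conv_rhs => rw [p.as_sum_range_C_mul_X_pow' (Nat.lt_succ_of_le hp)]
  exact sum_congr rfl fun n hn => by rw [ha n (mem_range_succ_iff.1 hn)]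

theorem pade_type_interpolant_consistency_general
    (k : ℕ) (P Q : Polynomial ℂ)
    (hPdeg : P.natDegree ≤ k) (hQdeg : Q.natDegree ≤ k) (hQ0 : Q.coeff 0 = 1)
    (c : ℕ → ℂ)
    (hc : ∀ i, c i = PowerSeries.coeff (R := ℂ) i ((P : PowerSeries ℂ) * (Q : PowerSeries ℂ)⁻¹))
    (S : ℕ → ℂ → ℂ) (hS : ∀ n t, S n t = ∑ j ∈ range (n + 1), c j * t ^ j)
    (τ : Fin k → ℂ)
    (hQτ : ∀ m, Q.eval (τ m) ≠ 0)
    (fv : Fin k → ℂ) (hf : ∀ m, fv m = P.eval (τ m) / Q.eval (τ m))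
    (b : ℕ → ℂ) (hb : ∀ i, b i = Q.coeff i) :
    PadeInterpSystem k τ fv S b ∧
    (∀ n ≤ k, ∑ j ∈ range (n + 1), c (n - j) * b j = P.coeff n) ∧
    (∀ b' : ℕ → ℂ, b' 0 = 1 → PadeInterpSystem k τ fv S b' →
      (∀ b₁ b₂ : ℕ → ℂ, b₁ 0 = 1 → PadeInterpSystem k τ fv S b₁ →
        b₂ 0 = 1 → PadeInterpSystem k τ fv S b₂ → ∀ i ≤ k, b₁ i = b₂ i) →
      (∑ n ∈ range (k + 1),
          Polynomial.C (∑ j ∈ range (n + 1), c (n - j) * b' j) * Polynomial.X ^ n) * Q =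
        P * ∑ i ∈ range (k + 1), Polynomial.C (b' i) * Polynomial.X ^ i) := by
  have hnum : ∀ n, ∑ j ∈ range (n + 1), c (n - j) * b j = P.coeff n := fun n => by
    simpa [hc, hb] using
      PowerSeries.sum_coeff_mul_inv_mul_coeff (P : PowerSeries ℂ) Q (by simp [hQ0]) n
  have hsys : PadeInterpSystem k τ fv S b := by
    refine (padeInterpSystem_iff hS).2 fun m => ?_
    simp only [hnum, ← Polynomial.eval_eq_sum_range' (Nat.lt_succ_of_le hPdeg)]
    simp only [hb, hf, ← Polynomial.eval_eq_sum_range' (Nat.lt_succ_of_le hQdeg)]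
    field_simp [hQτ m]
  refine ⟨hsys, fun n _ => hnum n, fun b' hb'0 hsys' huniq => ?_⟩
  have hb' : ∀ i ≤ k, b' i = b i := huniq b' b hb'0 hsys' (hb 0 ▸ hQ0) hsys
  rw [Polynomial.sum_range_C_mul_X_pow_eq hPdeg fun n hn => ?_,
    Polynomial.sum_range_C_mul_X_pow_eq hQdeg fun i hi => by rw [hb' i hi, hb], mul_comm]
  rw [← hnum]
  exact sum_congr rfl fun j hj => by rw [hb' j ((mem_range_succ_iff.1 hj).trans hn)]

/-- **consistency property.** If `f = P/Q` is rational with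
`deg P, deg Q ≤ k` and `Q(0) = 1`, `c_i` the coefficients of `P·Q⁻¹`, and
`f_m = P(τ_m)/Q(τ_m)` at distinct nonzero nodes, then (1) the coefficients of `Q`
solve the interpolation system; (2) the numerator relations reproduce the
coefficients of `P`; hence, if the system normalized by `b_0 = 1` has a unique
solution, the Padé-type rational interpolant is identical to `P/Q`. -/
theorem pade_type_interpolant_consistency
    (k : ℕ) (P Q : Polynomial ℂ)
    (hPdeg : P.natDegree ≤ k) (hQdeg : Q.natDegree ≤ k) (hQ0 : Q.coeff 0 = 1)
    (c : ℕ → ℂ)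
    (hc : ∀ i, c i = PowerSeries.coeff (R := ℂ) i ((P : PowerSeries ℂ) * (Q : PowerSeries ℂ)⁻¹))
    (S : ℕ → ℂ → ℂ) (hS : ∀ n t, S n t = ∑ j ∈ range (n + 1), c j * t ^ j)
    (τ : Fin k → ℂ) (hinj : Function.Injective τ) (hτ0 : ∀ i, τ i ≠ 0)
    (hQτ : ∀ m, Q.eval (τ m) ≠ 0)
    (fv : Fin k → ℂ) (hf : ∀ m, fv m = P.eval (τ m) / Q.eval (τ m))
    (b : ℕ → ℂ) (hb : ∀ i, b i = Q.coeff i) :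
    PadeInterpSystem k τ fv S b ∧
    (∀ n ≤ k, ∑ j ∈ range (n + 1), c (n - j) * b j = P.coeff n) ∧
    (∀ b' : ℕ → ℂ, b' 0 = 1 → PadeInterpSystem k τ fv S b' →
      (∀ b₁ b₂ : ℕ → ℂ, b₁ 0 = 1 → PadeInterpSystem k τ fv S b₁ →
        b₂ 0 = 1 → PadeInterpSystem k τ fv S b₂ → ∀ i ≤ k, b₁ i = b₂ i) →
      (∑ n ∈ range (k + 1),
          Polynomial.C (∑ j ∈ range (n + 1), c (n - j) * b' j) * Polynomial.X ^ n) * Q =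
        P * ∑ i ∈ range (k + 1), Polynomial.C (b' i) * Polynomial.X ^ i) :=
  pade_type_interpolant_consistency_general k P Q hPdeg hQdeg hQ0 c hc S hS τ hQτ fv hf b hb
end
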